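/- Let Φ and Ψ be frames for H, and let m be a sequence of nonzero scalars such that mΦ = (m_n φ_n) is also a frame for H. Assume M = M_{m,Φ,Ψ} is invertible. Then Ψ† := (M^{-1}(m_n φ_n)) is a dual frame of Ψ, and it is the unique sequence in H satisfying M^{-1} = M_{1/m, Ψ†, Φ^{ad}} for every a-pseudo-dual Φ^{ad} of Φ. -/

import Mathlib

open scoped ComplexConjugate ComplexInnerProductSpace

variable {H : Type*} [NormedAddCommGroup H] [InnerProductSpace ℂ H] [CompleteSpace H]

/-- `Φ` is a Bessel sequence in `H`. -/
def IsBessel (Φ : ℕ → H) : Prop :=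
  ∃ B : ℝ, 0 < B ∧ ∀ f : H, Summable (fun n => ‖⟪Φ n, f⟫‖ ^ 2) ∧
    ∑' n, ‖⟪Φ n, f⟫‖ ^ 2 ≤ B * ‖f‖ ^ 2

/-- `Φ` is a frame for `H`. -/
def IsFrame (Φ : ℕ → H) : Prop :=
  ∃ A B : ℝ, 0 < A ∧ 0 < B ∧ ∀ f : H, Summable (fun n => ‖⟪Φ n, f⟫‖ ^ 2) ∧
    A * ‖f‖ ^ 2 ≤ ∑' n, ‖⟪Φ n, f⟫‖ ^ 2 ∧ ∑' n, ‖⟪Φ n, f⟫‖ ^ 2 ≤ B * ‖f‖ ^ 2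

/-- `F` is a dual frame of the frame `Φ`:
`f = Σ ⟨f, Φ n⟩ F n = Σ ⟨f, F n⟩ Φ n` for all `f` (paper convention `⟨f, x⟩ = ⟪x, f⟫`). -/
def IsDualFrame (Φ F : ℕ → H) : Prop :=
  IsFrame F ∧ ∀ f : H, HasSum (fun n => ⟪Φ n, f⟫ • F n) f ∧ HasSum (fun n => ⟪F n, f⟫ • Φ n) f

/-- `F` is an analysis pseudo-dual of `Φ`: `f = Σ ⟨f, F n⟩ Φ n` for all `f`. -/
def IsAPseudoDual (Φ F : ℕ → H) : Prop := ∀ f : H, HasSum (fun n => ⟪F n, f⟫ • Φ n) f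

/-- `F` is a synthesis pseudo-dual of `Φ`: `f = Σ ⟨f, Φ n⟩ F n` for all `f`. -/
def IsSPseudoDual (Φ F : ℕ → H) : Prop := ∀ f : H, HasSum (fun n => ⟪Φ n, f⟫ • F n) f

/-- The frame operator `S_Φ f = Σ ⟨f, Φ n⟩ Φ n`. -/
noncomputable def frameOp (Φ : ℕ → H) (f : H) : H := ∑' n, ⟪Φ n, f⟫ • Φ n

/-- `m` is semi-normalized: `0 < a ≤ ‖m n‖ ≤ b < ∞`. -/
def SemiNormalized (m : ℕ → ℂ) : Prop := ∃ a b : ℝ, 0 < a ∧ ∀ n, a ≤ ‖m n‖ ∧ ‖m n‖ ≤ b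

/-!
With `Ψ† n = N (m n • Φ n)`, applying `N = M⁻¹` to the expansion of `M f` gives
`f = Σ ⟨f, ψ n⟩ Ψ† n`. The other reconstruction `f = Σ ⟨f, Ψ† n⟩ ψ n` holds weakly by adjointness,
and in norm because `Ψ` is Bessel and `⟨f, Ψ† n⟩ = ⟨N† f, m n φ n⟩` is square summable;
`Ψ†` is a frame as the image of the frame `mΦ` under the invertible `N`.
For uniqueness, `N† (conj m • Ψ)` is an a-pseudo-dual of `Φ`, and an a-pseudo-dual `F` stays one
after adding `conj (c n) • g` whenever `Σ c n • φ n = 0`. Comparing the expansions of `N f` for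
`F` and for such a perturbation with `c n = δ n k - ⟨φ k, F n⟩` pins down the `k`-th term.
-/

open scoped InnerProduct

section

variable {E : Type*} [NormedAddCommGroup E] [InnerProductSpace ℂ E]

theorem IsFrame.isBessel {Φ : ℕ → E} (hΦ : IsFrame Φ) : IsBessel Φ := by
  obtain ⟨_, B, _, hB, h⟩ := hΦ
  exact ⟨B, hB, fun f => ⟨(h f).1, (h f).2.2⟩⟩

theorem hasSum_of_summable_of_hasSum_inner {ι : Type*} {u : ι → E} {x : E} (hu : Summable u)
    (h : ∀ g, HasSum (fun n => ⟪u n, g⟫) ⟪x, g⟫) : HasSum u x := by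
  obtain ⟨y, hy⟩ := hu
  suffices y = x from this ▸ hy
  refine ext_inner_right ℂ fun g => ?_
  have := (hy.mapL (innerSL ℂ g)).star
  simp only [innerSL_apply_apply, Complex.star_def, inner_conj_symm] at this
  exact this.unique (h g)

section Bessel

variable {Ψ : ℕ → E}

theorem norm_sum_smul_sq_le {B : ℝ} (hB0 : 0 ≤ B)
    (hB : ∀ f : E, Summable (fun n => ‖⟪Ψ n, f⟫‖ ^ 2) ∧ ∑' n, ‖⟪Ψ n, f⟫‖ ^ 2 ≤ B * ‖f‖ ^ 2)
    (c : ℕ → ℂ) (t : Finset ℕ) :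
    ‖∑ n ∈ t, c n • Ψ n‖ ^ 2 ≤ B * ∑ n ∈ t, ‖c n‖ ^ 2 := by
  set v := ∑ n ∈ t, c n • Ψ n
  have hY : ∑ n ∈ t, ‖⟪Ψ n, v⟫‖ ^ 2 ≤ B * ‖v‖ ^ 2 :=
    ((hB v).1.sum_le_tsum t fun _ _ => sq_nonneg _).trans (hB v).2
  have hv : ‖v‖ ^ 2 ≤ ∑ n ∈ t, ‖c n‖ * ‖⟪Ψ n, v⟫‖ :=
    calc ‖v‖ ^ 2 = (⟪v, v⟫).re := (inner_self_eq_norm_sq (𝕜 := ℂ) v).symm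
      _ = ∑ n ∈ t, (conj (c n) * ⟪Ψ n, v⟫).re := by
        simp only [v, sum_inner, inner_smul_left, Complex.re_sum]
      _ ≤ ∑ n ∈ t, ‖c n‖ * ‖⟪Ψ n, v⟫‖ := Finset.sum_le_sum fun n _ => by
        simpa only [norm_mul, Complex.norm_conj] using Complex.re_le_norm (conj (c n) * ⟪Ψ n, v⟫)
  have hCS := Finset.sum_mul_sq_le_sq_mul_sq t (fun n => ‖c n‖) (fun n => ‖⟪Ψ n, v⟫‖)
  have hv4 : ‖v‖ ^ 2 * ‖v‖ ^ 2 ≤ (B * ∑ n ∈ t, ‖c n‖ ^ 2) * ‖v‖ ^ 2 := by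
    have hX : 0 ≤ ∑ n ∈ t, ‖c n‖ ^ 2 := Finset.sum_nonneg fun _ _ => sq_nonneg _
    nlinarith [sq_nonneg ‖v‖]
  rcases (sq_nonneg ‖v‖).eq_or_lt with hv0 | hv0
  · rw [← hv0]
    exact mul_nonneg hB0 (Finset.sum_nonneg fun _ _ => sq_nonneg _)
  · exact le_of_mul_le_mul_right hv4 hv0

theorem IsBessel.summable_smul [CompleteSpace E] (hΨ : IsBessel Ψ) {c : ℕ → ℂ}
    (hc : Summable fun n => ‖c n‖ ^ 2) : Summable fun n => c n • Ψ n := by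
  obtain ⟨B, hB0, hB⟩ := hΨ
  rw [summable_iff_vanishing_norm]
  intro ε hε
  obtain ⟨s, hs⟩ := summable_iff_vanishing_norm.1 hc (ε ^ 2 / B) (by positivity)
  refine ⟨s, fun t ht => ?_⟩
  have hX : ∑ n ∈ t, ‖c n‖ ^ 2 < ε ^ 2 / B := by
    have hX0 : 0 ≤ ∑ n ∈ t, ‖c n‖ ^ 2 := Finset.sum_nonneg fun _ _ => sq_nonneg _
    simpa only [Real.norm_eq_abs, abs_of_nonneg hX0] using hs t ht
  refine lt_of_pow_lt_pow_left₀ 2 hε.le ?_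
  calc ‖∑ n ∈ t, c n • Ψ n‖ ^ 2 ≤ B * ∑ n ∈ t, ‖c n‖ ^ 2 := norm_sum_smul_sq_le hB0.le hB c t
    _ < B * (ε ^ 2 / B) := by gcongr
    _ = ε ^ 2 := by field_simp

end Bessel

theorem IsFrame.map_of_rightInverse [CompleteSpace E] {Φ : ℕ → E} (hΦ : IsFrame Φ)
    {T S : E →L[ℂ] E} (hTS : ∀ f, T (S f) = f) : IsFrame fun n => T (Φ n) := by
  obtain ⟨A, B, hA, hB, h⟩ := hΦ
  have hleft : ∀ f, (S†) ((T†) f) = f := fun f => ext_inner_left ℂ fun g => by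
    rw [ContinuousLinearMap.adjoint_inner_right, ContinuousLinearMap.adjoint_inner_right, hTS]
  have hlow : ∀ f, ‖f‖ ^ 2 ≤ (‖S‖ ^ 2 + 1) * ‖(T†) f‖ ^ 2 := fun f =>
    calc ‖f‖ ^ 2 = ‖(S†) ((T†) f)‖ ^ 2 := by rw [hleft]
      _ ≤ (‖S‖ * ‖(T†) f‖) ^ 2 := by
        gcongr
        simpa only [LinearIsometryEquiv.norm_map] using (S†).le_opNorm ((T†) f)
      _ ≤ (‖S‖ ^ 2 + 1) * ‖(T†) f‖ ^ 2 := by nlinarith [sq_nonneg ‖(T†) f‖]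
  have hup : ∀ f, ‖(T†) f‖ ^ 2 ≤ (‖T‖ ^ 2 + 1) * ‖f‖ ^ 2 := fun f =>
    calc ‖(T†) f‖ ^ 2 ≤ (‖T‖ * ‖f‖) ^ 2 := by
          gcongr
          simpa only [LinearIsometryEquiv.norm_map] using (T†).le_opNorm f
      _ ≤ (‖T‖ ^ 2 + 1) * ‖f‖ ^ 2 := by nlinarith [sq_nonneg ‖f‖]
  refine ⟨A / (‖S‖ ^ 2 + 1), B * (‖T‖ ^ 2 + 1), by positivity, by positivity, fun f => ?_⟩
  simp only [← ContinuousLinearMap.adjoint_inner_right]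
  obtain ⟨hsum, hlower, hupper⟩ := h ((T†) f)
  refine ⟨hsum, ?_, ?_⟩
  · calc A / (‖S‖ ^ 2 + 1) * ‖f‖ ^ 2 ≤ A * ‖(T†) f‖ ^ 2 := by
          rw [div_mul_eq_mul_div, div_le_iff₀ (by positivity)]
          nlinarith [hlow f]
      _ ≤ _ := hlower
  · calc _ ≤ B * ‖(T†) f‖ ^ 2 := hupper
      _ ≤ B * ((‖T‖ ^ 2 + 1) * ‖f‖ ^ 2) := by gcongr; exact hup f
      _ = B * (‖T‖ ^ 2 + 1) * ‖f‖ ^ 2 := by ring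

section PseudoDual

variable {Φ F G : ℕ → E}

theorem IsAPseudoDual.add_conj_smul (hF : IsAPseudoDual Φ F) {c : ℕ → ℂ}
    (hc : HasSum (fun n => c n • Φ n) 0) (g : E) :
    IsAPseudoDual Φ fun n => F n + conj (c n) • g := by
  intro f
  convert (hF f).add (hc.const_smul ⟪g, f⟫) using 1
  · funext n
    rw [inner_add_left, inner_smul_left, Complex.conj_conj, add_smul, smul_smul, mul_comm]
  · simp

theorem IsAPseudoDual.hasSum_ite_sub_inner_smul (hF : IsAPseudoDual Φ F) (k : ℕ) :
    HasSum (fun n => ((if n = k then 1 else 0) - ⟪F n, Φ k⟫) • Φ n) 0 := by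
  convert (hasSum_ite_eq k (Φ k)).sub (hF (Φ k)) using 1
  · funext n
    split_ifs with hn <;> simp [hn, sub_smul]
  · simp

theorem eq_of_forall_isAPseudoDual_hasSum (hF : IsAPseudoDual Φ F) {L : E → E}
    (hG : ∀ Φad, IsAPseudoDual Φ Φad → ∀ f, HasSum (fun n => ⟪Φad n, f⟫ • G n) (L f)) :
    G = fun k => L (Φ k) := by
  funext k
  set c : ℕ → ℂ := fun n => (if n = k then 1 else 0) - ⟪F n, Φ k⟫
  have hcG : HasSum (fun n => c n • G n) (G k - L (Φ k)) := by
    convert (hasSum_ite_eq k (G k)).sub (hG F hF (Φ k)) using 1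
    funext n
    split_ifs with hn <;> simp [c, hn, sub_smul]
  -- comparing `F` with the perturbed pseudo-dual `F + conj c • g` kills `⟪g, f⟫ • Σ c n • G n`
  have hkill : ∀ g f, ⟪g, f⟫ • (G k - L (Φ k)) = 0 := fun g f => by
    have hsub := (hG _ ((hF.add_conj_smul (hF.hasSum_ite_sub_inner_smul k)) g) f).sub (hG F hF f)
    rw [sub_self] at hsub
    refine (hcG.const_smul ⟪g, f⟫).unique (hsub.congr_fun fun n => ?_)
    simp only [inner_add_left, inner_smul_left, Complex.conj_conj, add_smul, smul_smul,
      add_sub_cancel_left, mul_comm, c]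
  have := hkill (G k - L (Φ k)) (G k - L (Φ k))
  rwa [smul_eq_zero, inner_self_eq_zero, or_self, sub_eq_zero] at this

theorem forall_isAPseudoDual_hasSum_iff (hF : IsAPseudoDual Φ F) (L : E →L[ℂ] E) :
    (∀ Φad, IsAPseudoDual Φ Φad → ∀ f, HasSum (fun n => ⟪Φad n, f⟫ • G n) (L f)) ↔
      G = fun n => L (Φ n) := by
  refine ⟨eq_of_forall_isAPseudoDual_hasSum hF, ?_⟩
  rintro rfl Φad hΦad f
  simpa only [map_smul] using (hΦad f).mapL L

end PseudoDual

section Multiplier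

variable {Φ Ψ : ℕ → E} {m : ℕ → ℂ} {M N : E →L[ℂ] E}

theorem hasSum_inner_smul_map_smul
    (hM : ∀ f : E, HasSum (fun n => (m n * ⟪Ψ n, f⟫) • Φ n) (M f))
    (hNM : ∀ f, N (M f) = f) (f : E) :
    HasSum (fun n => ⟪Ψ n, f⟫ • N (m n • Φ n)) f := by
  convert (hM f).mapL N using 1
  · funext n
    simp only [map_smul, smul_smul, mul_comm]
  · rw [hNM]

theorem hasSum_inner_map_smul_smul [CompleteSpace E]
    (hM : ∀ f : E, HasSum (fun n => (m n * ⟪Ψ n, f⟫) • Φ n) (M f)) (hΨ : IsBessel Ψ)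
    (hmΦ : IsBessel fun n => m n • Φ n)
    (hNM : ∀ f, N (M f) = f) (f : E) :
    HasSum (fun n => ⟪N (m n • Φ n), f⟫ • Ψ n) f := by
  simp only [← ContinuousLinearMap.adjoint_inner_right]
  refine hasSum_of_summable_of_hasSum_inner (hΨ.summable_smul ?_) fun g => ?_
  · obtain ⟨_, _, h⟩ := hmΦ
    exact (h ((N†) f)).1
  · have hterm : ∀ n, ⟪⟪m n • Φ n, (N†) f⟫ • Ψ n, g⟫ = ⟪(N†) f, (m n * ⟪Ψ n, g⟫) • Φ n⟫ := by
      intro n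
      rw [inner_smul_left, inner_conj_symm, inner_smul_right, inner_smul_right]
      ring
    have hlim : ⟪(N†) f, M g⟫ = ⟪f, g⟫ := by rw [ContinuousLinearMap.adjoint_inner_left, hNM]
    simpa only [hterm, hlim, innerSL_apply_apply] using (hM g).mapL (innerSL ℂ ((N†) f))

theorem isAPseudoDual_adjoint_conj_smul [CompleteSpace E]
    (hM : ∀ f : E, HasSum (fun n => (m n * ⟪Ψ n, f⟫) • Φ n) (M f)) (hMN : ∀ f, M (N f) = f) :
    IsAPseudoDual Φ fun n => (N†) (conj (m n) • Ψ n) := by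
  intro f
  simpa only [ContinuousLinearMap.adjoint_inner_left, inner_smul_left, Complex.conj_conj, hMN]
    using hM (N f)

end Multiplier

end

theorem stmt8_general (Φ Ψ : ℕ → H) (m : ℕ → ℂ) (hΨ : IsFrame Ψ)
    (hm : ∀ n, m n ≠ 0) (hmΦ : IsFrame (fun n => m n • Φ n)) (M N : H →L[ℂ] H)
    (hM : ∀ f : H, HasSum (fun n => (m n * ⟪Ψ n, f⟫) • Φ n) (M f))
    (hNM : ∀ f : H, N (M f) = f) (hMN : ∀ f : H, M (N f) = f) :
    IsDualFrame Ψ (fun n => N (m n • Φ n)) ∧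
    ∀ G : ℕ → H,
      (∀ Φad : ℕ → H, IsAPseudoDual Φ Φad → ∀ f : H,
        HasSum (fun n => ((m n)⁻¹ * ⟪Φad n, f⟫) • G n) (N f))
      ↔ G = fun n => N (m n • Φ n) := by
  refine ⟨⟨hmΦ.map_of_rightInverse hNM, fun f => ⟨hasSum_inner_smul_map_smul hM hNM f,
    hasSum_inner_map_smul_smul hM hΨ.isBessel hmΦ.isBessel hNM f⟩⟩, fun G => ?_⟩
  simp only [mul_comm (m _)⁻¹, mul_smul]
  rw [forall_isAPseudoDual_hasSum_iff (isAPseudoDual_adjoint_conj_smul hM hMN) N, funext_iff,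
    funext_iff]
  exact forall_congr' fun n => by rw [inv_smul_eq_iff₀ (hm n), map_smul]

theorem stmt8 (Φ Ψ : ℕ → H) (m : ℕ → ℂ) (hΦ : IsFrame Φ) (hΨ : IsFrame Ψ)
    (hm : ∀ n, m n ≠ 0) (hmΦ : IsFrame (fun n => m n • Φ n)) (M N : H →L[ℂ] H)
    (hM : ∀ f : H, HasSum (fun n => (m n * ⟪Ψ n, f⟫) • Φ n) (M f))
    (hNM : ∀ f : H, N (M f) = f) (hMN : ∀ f : H, M (N f) = f) :
    IsDualFrame Ψ (fun n => N (m n • Φ n)) ∧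
    ∀ G : ℕ → H,
      (∀ Φad : ℕ → H, IsAPseudoDual Φ Φad → ∀ f : H,
        HasSum (fun n => ((m n)⁻¹ * ⟪Φad n, f⟫) • G n) (N f))
      ↔ G = fun n => N (m n • Φ n) :=
  stmt8_general Φ Ψ m hΨ hm hmΦ M N hM hNM hMN
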